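/- Let s ∈ (0,1) and τ > 0. On the open upper half-plane {x₂ > 0}, the function w_{0,s}^{1+τ} where w_{0,s}(x₁,x₂) = (√(x₁²+x₂²)+x₁)^s satisfies L_s(w_{0,s}^{1+τ}) = 2 s² τ(1+τ) x₂^{1−2s} (x₁²+x₂²)^{−1/2} w_{0,s}^{1 − 1/s + τ}, where L_s u = ∂₁(x₂^{1−2s}∂₁u) + ∂₂(x₂^{1−2s}∂₂u). -/

import Mathlib

/-!
Write `r = √(x₁² + x₂²)` and `B = r + x₁`, so that `w_{0,s}^{1+τ} = B^α` with `α = s(1+τ)`.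
Using `∂₁B = B / r`, `∂₂B = x₂ / r` and `x₂² = (r - x₁) B`, a direct computation gives
`L_s(B^α) = 2α(α - s) x₂^{1-2s} r⁻¹ B^{α-1}` for every real `α`. The case `α = s` is
`L_s w_{0,s} = 0`, and `α = s(1+τ)` is the theorem since `B^{α-1} = w_{0,s}^{1-1/s+τ}`.
-/

open Real

/-- The `s`-homogeneous model function `w_{0,s}`. -/
noncomputable def w0 (s x₁ x₂ : ℝ) : ℝ :=
  (Real.sqrt (x₁ ^ 2 + x₂ ^ 2) + x₁) ^ s

-- The paper's `L_s u = ∂₁(x₂^{1-2s} ∂₁u) + ∂₂(x₂^{1-2s} ∂₂u)`.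
noncomputable def weightedLaplacian (s : ℝ) (u : ℝ → ℝ → ℝ) (x₁ x₂ : ℝ) : ℝ :=
  deriv (fun t => x₂ ^ (1 - 2 * s) * deriv (fun a => u a x₂) t) x₁
    + deriv (fun t => t ^ (1 - 2 * s) * deriv (fun b => u x₁ b) t) x₂

lemma sqrt_sq_add_sq_add_nonneg (a b : ℝ) : 0 ≤ √(a ^ 2 + b ^ 2) + a := by
  have := abs_le_sqrt (le_add_of_nonneg_right (sq_nonneg b) : a ^ 2 ≤ a ^ 2 + b ^ 2)
  linarith [neg_abs_le a]

lemma sqrt_sq_add_sq_add_pos (a : ℝ) {b : ℝ} (hb : b ≠ 0) : 0 < √(a ^ 2 + b ^ 2) + a := by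
  have : |a| < √(a ^ 2 + b ^ 2) := by
    rw [← sqrt_sq_eq_abs]
    exact sqrt_lt_sqrt (sq_nonneg a) (lt_add_of_pos_right _ (by positivity))
  linarith [neg_abs_le a]

lemma hasDerivAt_sqrt_sq_add {c x : ℝ} (h : x ^ 2 + c ≠ 0) :
    HasDerivAt (fun y => √(y ^ 2 + c)) (x / √(x ^ 2 + c)) x := by
  convert ((hasDerivAt_pow 2 x).add_const c).sqrt h using 1
  field_simp
  ring

lemma hasDerivAt_sqrt_add_sq {c x : ℝ} (h : c + x ^ 2 ≠ 0) :
    HasDerivAt (fun y => √(c + y ^ 2)) (x / √(c + x ^ 2)) x := by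
  simpa only [add_comm c] using hasDerivAt_sqrt_sq_add (c := c) (by rwa [add_comm])

section

variable (α : ℝ)

lemma hasDerivAt_sqrt_add_rpow_fst {b : ℝ} (hb : b ≠ 0) (x : ℝ) :
    HasDerivAt (fun a => (√(a ^ 2 + b ^ 2) + a) ^ α)
      (α * (√(x ^ 2 + b ^ 2) + x) ^ α / √(x ^ 2 + b ^ 2)) x := by
  have hB := sqrt_sq_add_sq_add_pos x hb
  refine (((hasDerivAt_sqrt_sq_add (by positivity)).add (hasDerivAt_id' x)).rpow_const
    (p := α) (Or.inl hB.ne')).congr_deriv ?_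
  simp only [Pi.add_apply]
  rw [rpow_sub_one hB.ne']
  field_simp
  ring

lemma hasDerivAt_sqrt_add_rpow_snd (a : ℝ) {y : ℝ} (hy : y ≠ 0) :
    HasDerivAt (fun b => (√(a ^ 2 + b ^ 2) + a) ^ α)
      (α * (√(a ^ 2 + y ^ 2) + a) ^ (α - 1) * y / √(a ^ 2 + y ^ 2)) y := by
  have hB := sqrt_sq_add_sq_add_pos a hy
  refine (((hasDerivAt_sqrt_add_sq (by positivity)).add_const a).rpow_const
    (p := α) (Or.inl hB.ne')).congr_deriv ?_
  ring

lemma deriv_const_mul_deriv_sqrt_add_rpow_fst (c : ℝ) {b : ℝ} (hb : b ≠ 0) (x : ℝ) :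
    deriv (fun t => c * deriv (fun a => (√(a ^ 2 + b ^ 2) + a) ^ α) t) x
      = c * α * (√(x ^ 2 + b ^ 2) + x) ^ α * (α * √(x ^ 2 + b ^ 2) - x)
          / √(x ^ 2 + b ^ 2) ^ 3 := by
  have hr : 0 < √(x ^ 2 + b ^ 2) := by positivity
  simp_rw [(hasDerivAt_sqrt_add_rpow_fst α hb _).deriv, mul_div_assoc]
  refine ((((hasDerivAt_sqrt_add_rpow_fst α hb x).div
    (hasDerivAt_sqrt_sq_add (by positivity)) hr.ne').const_mul α).const_mul c).deriv.trans ?_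
  field_simp

lemma deriv_rpow_mul_deriv_sqrt_add_rpow_snd (s a : ℝ) {y : ℝ} (hy : 0 < y) :
    deriv (fun t => t ^ (1 - 2 * s) * deriv (fun b => (√(a ^ 2 + b ^ 2) + a) ^ α) t) y
      = α * y ^ (1 - 2 * s) * (√(a ^ 2 + y ^ 2) + a) ^ (α - 1)
          * ((1 - 2 * s) * √(a ^ 2 + y ^ 2) ^ 2
              + (α - 1) * (√(a ^ 2 + y ^ 2) - a) * √(a ^ 2 + y ^ 2) + a ^ 2)
          / √(a ^ 2 + y ^ 2) ^ 3 := by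
  have hB := sqrt_sq_add_sq_add_pos a hy.ne'
  have hr : 0 < √(a ^ 2 + y ^ 2) := by positivity
  have hr2 : √(a ^ 2 + y ^ 2) ^ 2 = a ^ 2 + y ^ 2 := sq_sqrt (by positivity)
  have hev : (fun t => t ^ (1 - 2 * s) * deriv (fun b => (√(a ^ 2 + b ^ 2) + a) ^ α) t)
      =ᶠ[nhds y] fun t =>
        t ^ (1 - 2 * s) * (α * ((√(a ^ 2 + t ^ 2) + a) ^ (α - 1) * (t / √(a ^ 2 + t ^ 2)))) := by
    filter_upwards [Ioi_mem_nhds hy] with t ht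
    rw [(hasDerivAt_sqrt_add_rpow_snd α a ht.ne').deriv]
    ring
  have hquot : HasDerivAt (fun t => t / √(a ^ 2 + t ^ 2)) (a ^ 2 / √(a ^ 2 + y ^ 2) ^ 3) y := by
    refine ((hasDerivAt_id' y).div (hasDerivAt_sqrt_add_sq (by positivity)) hr.ne').congr_deriv ?_
    field_simp
    linear_combination hr2
  rw [hev.deriv_eq]
  refine ((hasDerivAt_rpow_const (Or.inl hy.ne')).mul
    (((hasDerivAt_sqrt_add_rpow_snd (α - 1) a hy.ne').mul hquot).const_mul α)).deriv.trans ?_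
  simp only [Pi.mul_apply]
  rw [rpow_sub_one hy.ne', rpow_sub_one hB.ne' (α - 1)]
  field_simp
  linear_combination (α - α ^ 2) * √(a ^ 2 + y ^ 2) * hr2

end

lemma weightedLaplacian_sqrt_add_rpow (s α : ℝ) (x₁ : ℝ) {x₂ : ℝ} (hx₂ : 0 < x₂) :
    weightedLaplacian s (fun a b => (√(a ^ 2 + b ^ 2) + a) ^ α) x₁ x₂
      = 2 * α * (α - s) * x₂ ^ (1 - 2 * s) * (√(x₁ ^ 2 + x₂ ^ 2))⁻¹
          * (√(x₁ ^ 2 + x₂ ^ 2) + x₁) ^ (α - 1) := by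
  have hB := sqrt_sq_add_sq_add_pos x₁ hx₂.ne'
  have hBα : (√(x₁ ^ 2 + x₂ ^ 2) + x₁) ^ α
      = (√(x₁ ^ 2 + x₂ ^ 2) + x₁) ^ (α - 1) * (√(x₁ ^ 2 + x₂ ^ 2) + x₁) := by
    rw [rpow_sub_one hB.ne', div_mul_cancel₀ _ hB.ne']
  rw [weightedLaplacian, deriv_const_mul_deriv_sqrt_add_rpow_fst α _ hx₂.ne',
    deriv_rpow_mul_deriv_sqrt_add_rpow_snd α s x₁ hx₂, hBα]
  field_simp
  ring

theorem stmt4_general (s τ : ℝ) (hs : s ∈ Set.Ioo (0 : ℝ) 1)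
    (x₁ x₂ : ℝ) (hx₂ : 0 < x₂) :
    deriv (fun t => x₂ ^ (1 - 2 * s) * deriv (fun a => w0 s a x₂ ^ (1 + τ)) t) x₁
      + deriv (fun t => t ^ (1 - 2 * s) * deriv (fun b => w0 s x₁ b ^ (1 + τ)) t) x₂
      = 2 * s ^ 2 * τ * (1 + τ) * x₂ ^ (1 - 2 * s) *
          (x₁ ^ 2 + x₂ ^ 2) ^ (-(1 : ℝ) / 2) * (w0 s x₁ x₂) ^ (1 - 1 / s + τ) := by
  have hw : ∀ a b p, w0 s a b ^ p = (√(a ^ 2 + b ^ 2) + a) ^ (s * p) := fun a b p =>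
    (rpow_mul (sqrt_sq_add_sq_add_nonneg a b) s p).symm
  have hsqrt : (x₁ ^ 2 + x₂ ^ 2) ^ (-(1 : ℝ) / 2) = (√(x₁ ^ 2 + x₂ ^ 2))⁻¹ := by
    rw [neg_div, rpow_neg (by positivity), sqrt_eq_rpow]
  have hexp : s * (1 - 1 / s + τ) = s * (1 + τ) - 1 := by
    field_simp [hs.1.ne']
    ring
  change weightedLaplacian s (fun a b => w0 s a b ^ (1 + τ)) x₁ x₂ = _
  simp only [hw]
  rw [weightedLaplacian_sqrt_add_rpow s _ x₁ hx₂, hsqrt, hexp]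
  ring

/-- The barrier computation:
`L_s(w_{0,s}^{1+τ}) = 2 s² τ(1+τ) x₂^{1-2s} (x₁²+x₂²)^{-1/2} w_{0,s}^{1-1/s+τ}`
on the open upper half-plane. -/
theorem stmt4 (s τ : ℝ) (hs : s ∈ Set.Ioo (0 : ℝ) 1) (hτ : 0 < τ)
    (x₁ x₂ : ℝ) (hx₂ : 0 < x₂) :
    deriv (fun t => x₂ ^ (1 - 2 * s) * deriv (fun a => w0 s a x₂ ^ (1 + τ)) t) x₁
      + deriv (fun t => t ^ (1 - 2 * s) * deriv (fun b => w0 s x₁ b ^ (1 + τ)) t) x₂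
      = 2 * s ^ 2 * τ * (1 + τ) * x₂ ^ (1 - 2 * s) *
          (x₁ ^ 2 + x₂ ^ 2) ^ (-(1 : ℝ) / 2) * (w0 s x₁ x₂) ^ (1 - 1 / s + τ) :=
  stmt4_general s τ hs x₁ x₂ hx₂
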